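/- arXiv:1611.00711 — 6 statements merged into one kernel-verified Lean document; each statement's English description precedes it below -/
import Mathlib

section
/- Let A and Ã be real symmetric n×n matrices. Assume A has n distinct eigenvalues and that for every eigenvector v of A one has 𝟙ᵀv ≠ 0, where 𝟙 is the all-ones vector. Suppose Q is a permutation matrix with Q A = Ã Q. Then every doubly stochastic matrix P satisfying P A = Ã P equals Q. -/
open Matrix BigOperators

def IsPermMatrix {n : ℕ} (P : Matrix (Fin n) (Fin n) ℝ) : Prop :=
  (∀ i j, P i j = 0 ∨ P i j = 1) ∧ (∀ i, ∑ j, P i j = 1) ∧ (∀ j, ∑ i, P i j = 1)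

def IsDoublyStochastic {n : ℕ} (P : Matrix (Fin n) (Fin n) ℝ) : Prop :=
  (∀ i j, 0 ≤ P i j) ∧ (∀ i, ∑ j, P i j = 1) ∧ (∀ j, ∑ i, P i j = 1)

/-!
Since `Q` is orthogonal, `B = Qᵀ P` commutes with `A`, and it fixes `𝟙` because `P` has unit row
sums and `Qᵀ` unit column sums. As `A` has simple spectrum, `B` is diagonal in an eigenbasis
`(vᵢ)` of `A`. Symmetry of `A` makes this basis orthogonal, so the `i`-th coordinate of `𝟙` is
`𝟙ᵀvᵢ / vᵢᵀvᵢ ≠ 0`, and `B 𝟙 = 𝟙` forces every diagonal entry of `B` to be `1`. Hence `Qᵀ P = 1`.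
-/

theorem commute_mul_of_intertwines {M : Type*} [Monoid M] {A Atil Q U P : M}
    (hUQ : U * Q = 1) (hQU : Q * U = 1) (hQA : Q * A = Atil * Q) (hPA : P * A = Atil * P) :
    Commute A (U * P) := by
  have hAU : A * U = U * Atil := by
    calc A * U = U * (Q * A) * U := by rw [← mul_assoc, hUQ, one_mul]
      _ = U * Atil * (Q * U) := by rw [hQA]; simp only [mul_assoc]
      _ = U * Atil := by rw [hQU, mul_one]
  change A * (U * P) = U * P * A
  rw [← mul_assoc, hAU, mul_assoc, ← hPA, mul_assoc]

namespace Matrix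

variable {ι K : Type*} [Fintype ι] [Field K]

theorem mulVec_one_eq_one {M : Matrix ι ι K} (h : ∀ i, ∑ j, M i j = 1) : M *ᵥ 1 = 1 := by
  ext i
  simp [mulVec, dotProduct, h i]

theorem IsSymm.dotProduct_eq_zero_of_eigenvalues_ne {A : Matrix ι ι K} (hA : A.IsSymm)
    {v w : ι → K} {a b : K} (hv : A *ᵥ v = a • v) (hw : A *ᵥ w = b • w) (hab : a ≠ b) :
    v ⬝ᵥ w = 0 := by
  have hsymm : (A *ᵥ v) ⬝ᵥ w = v ⬝ᵥ (A *ᵥ w) := by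
    rw [dotProduct_mulVec, ← mulVec_transpose, hA.eq]
  rw [hv, hw, smul_dotProduct, dotProduct_smul, smul_eq_mul, smul_eq_mul] at hsymm
  exact (mul_eq_zero.mp (by linear_combination hsymm : (a - b) * (v ⬝ᵥ w) = 0)).resolve_left
    (sub_ne_zero.mpr hab)

theorem exists_basis_of_eigenvectors [DecidableEq ι] {A : Matrix ι ι K} {lam : ι → K}
    {v : ι → ι → K} (hlam : Function.Injective lam)
    (hv : ∀ i, v i ≠ 0 ∧ A *ᵥ v i = lam i • v i) :
    ∃ b : Module.Basis ι K (ι → K), ⇑b = v := by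
  have hli : LinearIndependent K v :=
    Module.End.eigenvectors_linearIndependent' (toLin' A) lam hlam v fun i =>
      Module.End.hasEigenvector_iff.mpr
        ⟨Module.End.mem_eigenspace_iff.mpr (by simpa using (hv i).2), (hv i).1⟩
  exact ⟨basisOfLinearIndependentOfCardEqFinrank' v hli (by simp), by simp⟩

section Eigenbasis

variable {A : Matrix ι ι K} {b : Module.Basis ι K (ι → K)} {lam : ι → K}

theorem repr_mulVec_of_eigenbasis (hb : ∀ i, A *ᵥ b i = lam i • b i) (x : ι → K) (j : ι) :
    b.repr (A *ᵥ x) j = lam j * b.repr x j := by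
  have : (b.coord j).comp A.mulVecLin = lam j • b.coord j := by
    refine b.ext fun i => ?_
    simp only [LinearMap.comp_apply, mulVecLin_apply, hb, LinearMap.smul_apply, map_smul,
      Module.Basis.coord_apply, Module.Basis.repr_self, smul_eq_mul]
    rcases eq_or_ne i j with rfl | hij
    · rfl
    · simp [hij]
  simpa using LinearMap.congr_fun this x

theorem eq_repr_smul_of_mulVec_eq_smul (hlam : Function.Injective lam)
    (hb : ∀ i, A *ᵥ b i = lam i • b i) {i : ι} {w : ι → K} (hw : A *ᵥ w = lam i • w) :
    w = b.repr w i • b i := by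
  refine b.ext_elem fun j => ?_
  have hj := repr_mulVec_of_eigenbasis hb w j
  rw [hw, map_smul, Finsupp.smul_apply, smul_eq_mul] at hj
  rcases eq_or_ne j i with rfl | hji
  · simp
  · have : (lam i - lam j) * b.repr w j = 0 := by linear_combination hj
    simpa [Finsupp.single_apply, hji.symm, sub_ne_zero.mpr (hlam.ne hji.symm)] using this

theorem exists_mulVec_eq_smul_of_commute (hlam : Function.Injective lam)
    (hb : ∀ i, A *ᵥ b i = lam i • b i) {B : Matrix ι ι K} (hAB : Commute A B) :
    ∃ d : ι → K, ∀ i, B *ᵥ b i = d i • b i := by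
  refine ⟨fun i => b.repr (B *ᵥ b i) i, fun i => eq_repr_smul_of_mulVec_eq_smul hlam hb ?_⟩
  rw [mulVec_mulVec, hAB.eq, ← mulVec_mulVec, hb, mulVec_smul]

theorem eq_one_of_commute_of_mulVec_eq_self [DecidableEq ι] (hlam : Function.Injective lam)
    (hb : ∀ i, A *ᵥ b i = lam i • b i) {B : Matrix ι ι K} (hAB : Commute A B) {x : ι → K}
    (hx : ∀ i, b.repr x i ≠ 0) (hBx : B *ᵥ x = x) : B = 1 := by
  obtain ⟨d, hd⟩ := exists_mulVec_eq_smul_of_commute hlam hb hAB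
  have hd_one : ∀ i, d i = 1 := fun i => by
    have hi := repr_mulVec_of_eigenbasis hd x i
    rw [hBx] at hi
    exact (mul_eq_right₀ (hx i)).mp hi.symm
  refine toLin'.injective (b.ext fun i => ?_)
  simp [hd, hd_one]

theorem dotProduct_eq_repr_mul_of_pairwise_orthogonal
    (horth : Pairwise fun i j => b i ⬝ᵥ b j = 0) (x : ι → K) (j : ι) :
    b j ⬝ᵥ x = b.repr x j * (b j ⬝ᵥ b j) := by
  conv_lhs => rw [← b.sum_repr x]
  rw [dotProduct_sum, Finset.sum_eq_single j (fun i _ hij => by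
    rw [dotProduct_smul, horth hij.symm, smul_zero]) (by simp), dotProduct_smul, smul_eq_mul]

end Eigenbasis

end Matrix

theorem IsPermMatrix.mul_transpose_self {n : ℕ} {Q : Matrix (Fin n) (Fin n) ℝ}
    (hQ : IsPermMatrix Q) : Q * Qᵀ = 1 := by
  obtain ⟨h01, hrow, hcol⟩ := hQ
  have hnonneg : ∀ i j, 0 ≤ Q i j := fun i j => by rcases h01 i j with h | h <;> simp [h]
  ext i k
  simp only [mul_apply, transpose_apply, one_apply]
  split_ifs with hik
  · subst hik
    rw [← hrow i]
    exact Finset.sum_congr rfl fun j _ => by rcases h01 i j with h | h <;> simp [h]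
  · refine Finset.sum_eq_zero fun j _ => ?_
    -- two ones in column `j` would make its sum at least `2`
    by_contra hne
    have hi : Q i j = 1 := (h01 i j).resolve_left (left_ne_zero_of_mul hne)
    have hk : Q k j = 1 := (h01 k j).resolve_left (right_ne_zero_of_mul hne)
    have := Finset.sum_le_univ_sum_of_nonneg (s := {i, k}) fun m => hnonneg m j
    rw [Finset.sum_pair hik, hi, hk, hcol j] at this
    norm_num at this

theorem stmt_2_general {n : ℕ} (A Atil : Matrix (Fin n) (Fin n) ℝ)
    (hA : A.IsSymm)
    (hdist : ∃ (lam : Fin n → ℝ) (v : Fin n → Fin n → ℝ),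
      Function.Injective lam ∧ ∀ i, v i ≠ 0 ∧ A *ᵥ v i = lam i • v i)
    (hone : ∀ (v : Fin n → ℝ) (μ : ℝ), v ≠ 0 → A *ᵥ v = μ • v → ∑ i, v i ≠ 0)
    (Q : Matrix (Fin n) (Fin n) ℝ) (hQ : IsPermMatrix Q) (hQA : Q * A = Atil * Q)
    (P : Matrix (Fin n) (Fin n) ℝ) (hPds : IsDoublyStochastic P)
    (hPA : P * A = Atil * P) : P = Q := by
  obtain ⟨lam, v, hlam, hv⟩ := hdist
  obtain ⟨b, rfl⟩ := exists_basis_of_eigenvectors hlam hv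
  have hb : ∀ i, A *ᵥ b i = lam i • b i := fun i => (hv i).2
  have hQQt : Q * Qᵀ = 1 := hQ.mul_transpose_self
  have hcomm : Commute A (Qᵀ * P) :=
    commute_mul_of_intertwines (mul_eq_one_comm.mp hQQt) hQQt hQA hPA
  have hfix : (Qᵀ * P) *ᵥ 1 = 1 := by
    rw [← mulVec_mulVec, mulVec_one_eq_one hPds.2.1, mulVec_one_eq_one (M := Qᵀ) hQ.2.2]
  have horth : Pairwise fun i j => b i ⬝ᵥ b j = 0 := fun i j hij =>
    hA.dotProduct_eq_zero_of_eigenvalues_ne (hb i) (hb j) (hlam.ne hij)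
  have hrepr : ∀ i, b.repr 1 i ≠ 0 := fun i hi => by
    have := dotProduct_eq_repr_mul_of_pairwise_orthogonal horth 1 i
    rw [hi, zero_mul, dotProduct_one] at this
    exact hone _ _ (hv i).1 (hb i) this
  have hB : Qᵀ * P = 1 := eq_one_of_commute_of_mulVec_eq_self hlam hb hcomm hrepr hfix
  calc P = Q * (Qᵀ * P) := by rw [← mul_assoc, hQQt, one_mul]
    _ = Q := by rw [hB, mul_one]

theorem stmt_2 {n : ℕ} (A Atil : Matrix (Fin n) (Fin n) ℝ)
    (hA : A.IsSymm) (hAt : Atil.IsSymm)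
    (hdist : ∃ (lam : Fin n → ℝ) (v : Fin n → Fin n → ℝ),
      Function.Injective lam ∧ ∀ i, v i ≠ 0 ∧ A *ᵥ v i = lam i • v i)
    (hone : ∀ (v : Fin n → ℝ) (μ : ℝ), v ≠ 0 → A *ᵥ v = μ • v → ∑ i, v i ≠ 0)
    (Q : Matrix (Fin n) (Fin n) ℝ) (hQ : IsPermMatrix Q) (hQA : Q * A = Atil * Q)
    (P : Matrix (Fin n) (Fin n) ℝ) (hPds : IsDoublyStochastic P)
    (hPA : P * A = Atil * P) : P = Q :=
  stmt_2_general A Atil hA hdist hone Q hQ hQA P hPds hPA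
end

section
/- Let A and Ã be real symmetric n×n matrices. Assume A has n distinct eigenvalues, for every eigenvector v of A one has 𝟙ᵀv ≠ 0, and there exists a permutation matrix Q with Q A = Ã Q. Then the set { P : P doubly stochastic, P A = Ã P } is exactly the singleton {Q}; in particular the LP relaxation of the graph isomorphism problem is tight for such graphs. -/
open Matrix BigOperators

/-!
If `P` is doubly stochastic with `P A = Ã P`, then `R = Qᵀ P` commutes with `A` and fixes `𝟙`.
Since `A` has simple spectrum, `R` preserves each eigenline, `R vᵢ = cᵢ vᵢ`. Symmetry of `A` makes
the eigenvectors orthogonal, so the coordinate of `𝟙` along `vᵢ` is a nonzero multiple of `𝟙ᵀvᵢ ≠ 0`;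
comparing coordinates in `R 𝟙 = 𝟙` forces every `cᵢ = 1`, hence `R = 1` and `P = Q`.
-/

open Module

section Eigenbasis

variable {ι K : Type*} [Fintype ι] [Field K]

theorem Matrix.IsSymm.dotProduct_eq_zero_of_mulVec_eq_smul {A : Matrix ι ι K} (hA : A.IsSymm)
    {v w : ι → K} {μ ν : K} (hv : A *ᵥ v = μ • v) (hw : A *ᵥ w = ν • w) (hμν : μ ≠ ν) :
    v ⬝ᵥ w = 0 := by
  have h : μ * (v ⬝ᵥ w) = ν * (v ⬝ᵥ w) :=
    calc μ * (v ⬝ᵥ w) = (A *ᵥ v) ⬝ᵥ w := by rw [hv, smul_dotProduct, smul_eq_mul]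
      _ = v ⬝ᵥ (A *ᵥ w) := by rw [dotProduct_mulVec, ← mulVec_transpose, hA.eq]
      _ = ν * (v ⬝ᵥ w) := by rw [hw, dotProduct_smul, smul_eq_mul]
  by_contra hvw
  exact hμν (mul_right_cancel₀ hvw h)

theorem Matrix.linearIndependent_of_mulVec_eq_smul {A : Matrix ι ι K} {lam : ι → K}
    {v : ι → ι → K} (hlam : Function.Injective lam) (hv : ∀ i, v i ≠ 0 ∧ A *ᵥ v i = lam i • v i) :
    LinearIndependent K v :=
  End.eigenvectors_linearIndependent' A.mulVecLin lam hlam v fun i =>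
    ⟨End.mem_eigenspace_iff.mpr (hv i).2, (hv i).1⟩

theorem Module.Basis.repr_mulVec_of_mulVec_eq_smul (b : Basis ι K (ι → K)) {M : Matrix ι ι K}
    {μ : ι → K} (hb : ∀ i, M *ᵥ b i = μ i • b i) (x : ι → K) (j : ι) :
    b.repr (M *ᵥ x) j = μ j * b.repr x j := by
  have h : (b.coord j).comp M.mulVecLin = μ j • b.coord j := b.ext fun i => by
    by_cases hij : i = j
    · subst hij; simp [hb]
    · simp [hb, Finsupp.single_eq_of_ne' hij]
  exact LinearMap.congr_fun h x

theorem Module.Basis.eq_smul_of_mulVec_eq_smul (b : Basis ι K (ι → K)) {A : Matrix ι ι K}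
    {lam : ι → K} (hlam : Function.Injective lam) (hb : ∀ i, A *ᵥ b i = lam i • b i) {i : ι}
    {w : ι → K} (hw : A *ᵥ w = lam i • w) : w = b.repr w i • b i := by
  rw [b.ext_elem_iff]
  intro j
  rw [map_smul, b.repr_self, Finsupp.smul_apply]
  by_cases hij : i = j
  · simp [hij]
  · rw [Finsupp.single_eq_of_ne' hij, smul_zero]
    have h := b.repr_mulVec_of_mulVec_eq_smul hb w j
    rw [hw, map_smul, Finsupp.smul_apply, smul_eq_mul] at h
    by_contra hwj
    exact hij (hlam (mul_right_cancel₀ hwj h))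

theorem Module.Basis.dotProduct_eq_repr_mul (b : Basis ι K (ι → K))
    (horth : Pairwise fun i j => b i ⬝ᵥ b j = 0) (i : ι) (x : ι → K) :
    b i ⬝ᵥ x = b.repr x i * (b i ⬝ᵥ b i) := by
  conv_lhs => rw [← b.sum_repr x]
  rw [dotProduct_sum, Finset.sum_eq_single i (fun j _ hji => by
    rw [dotProduct_smul, horth hji.symm, smul_zero]) (by simp), dotProduct_smul, smul_eq_mul]

theorem Matrix.eq_one_of_commute_of_mulVec_one [DecidableEq ι] {A R : Matrix ι ι K}
    (hA : A.IsSymm) {lam : ι → K} {v : ι → ι → K} (hlam : Function.Injective lam)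
    (hv : ∀ i, v i ≠ 0 ∧ A *ᵥ v i = lam i • v i) (hsum : ∀ i, ∑ j, v i j ≠ 0)
    (hRA : Commute R A) (hR1 : R *ᵥ 1 = 1) : R = 1 := by
  let b : Basis ι K (ι → K) :=
    basisOfLinearIndependentOfCardEqFinrank' v (linearIndependent_of_mulVec_eq_smul hlam hv)
      (by simp)
  have hbv : ⇑b = v := coe_basisOfLinearIndependentOfCardEqFinrank' ..
  have hb : ∀ i, A *ᵥ b i = lam i • b i := hbv ▸ fun i => (hv i).2
  have horth : Pairwise fun i j => b i ⬝ᵥ b j = 0 := fun i j hij =>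
    hA.dotProduct_eq_zero_of_mulVec_eq_smul (hb i) (hb j) (hlam.ne hij)
  have hrepr_one : ∀ i, b.repr 1 i ≠ 0 := fun i h => hsum i <| by
    rw [← hbv, ← dotProduct_one, b.dotProduct_eq_repr_mul horth, h, zero_mul]
  have hRb : ∀ i, R *ᵥ b i = b.repr (R *ᵥ b i) i • b i := fun i =>
    b.eq_smul_of_mulVec_eq_smul hlam hb <| by
      rw [mulVec_mulVec, ← hRA.eq, ← mulVec_mulVec, hb, mulVec_smul]
  have hRb_one : ∀ i, b.repr (R *ᵥ b i) i = 1 := fun i => by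
    have h := b.repr_mulVec_of_mulVec_eq_smul hRb 1 i
    rw [hR1] at h
    exact (mul_eq_right₀ (hrepr_one i)).mp h.symm
  apply toLin'.injective
  rw [toLin'_one]
  exact b.ext fun i => by rw [toLin'_apply, hRb i, hRb_one i, one_smul, LinearMap.id_apply]

end Eigenbasis

theorem Matrix.commute_transpose_mul_of_mul_eq_mul {ι R : Type*} [Fintype ι] [DecidableEq ι]
    [CommRing R] {A B P Q : Matrix ι ι R} (hQ : Qᵀ * Q = 1) (hQA : Q * A = B * Q)
    (hPA : P * A = B * P) : Commute (Qᵀ * P) A := by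
  have hQB : Qᵀ * B = A * Qᵀ :=
    calc Qᵀ * B = Qᵀ * B * (Q * Qᵀ) := by rw [mul_eq_one_comm.mp hQ, Matrix.mul_one]
      _ = Qᵀ * Q * A * Qᵀ := by simp only [Matrix.mul_assoc, hQA]
      _ = A * Qᵀ := by rw [hQ, Matrix.one_mul]
  calc Qᵀ * P * A = Qᵀ * B * P := by rw [Matrix.mul_assoc, hPA, Matrix.mul_assoc]
    _ = A * (Qᵀ * P) := by rw [hQB, Matrix.mul_assoc]

theorem Matrix.mulVec_one_eq_one_s3 {ι R : Type*} [Fintype ι] [NonAssocSemiring R]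
    {M : Matrix ι ι R} (hM : ∀ i, ∑ j, M i j = 1) : M *ᵥ 1 = 1 := by
  ext i
  simp [mulVec, dotProduct, hM]

namespace IsPermMatrix

variable {n : ℕ} {Q : Matrix (Fin n) (Fin n) ℝ}

theorem isDoublyStochastic (hQ : IsPermMatrix Q) : IsDoublyStochastic Q :=
  ⟨fun i j => by rcases hQ.1 i j with h | h <;> simp [h], hQ.2.1, hQ.2.2⟩

theorem mul_eq_zero_of_ne (hQ : IsPermMatrix Q) (i : Fin n) {j k : Fin n} (hjk : j ≠ k) :
    Q i j * Q i k = 0 := by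
  rcases hQ.1 i j with hj | hj
  · simp [hj]
  rcases hQ.1 i k with hk | hk
  · simp [hk]
  have hle : ∑ m ∈ {j, k}, Q i m ≤ ∑ m, Q i m :=
    Finset.sum_le_sum_of_subset_of_nonneg (Finset.subset_univ _)
      fun m _ _ => hQ.isDoublyStochastic.1 i m
  rw [Finset.sum_pair hjk, hQ.2.1 i, hj, hk] at hle
  norm_num at hle

theorem transpose_mul_self (hQ : IsPermMatrix Q) : Qᵀ * Q = 1 := by
  ext j k
  rw [mul_apply, one_apply]
  split_ifs with hjk
  · subst hjk
    rw [← hQ.2.2 j]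
    refine Finset.sum_congr rfl fun i _ => ?_
    rcases hQ.1 i j with h | h <;> simp [h]
  · exact Finset.sum_eq_zero fun i _ => hQ.mul_eq_zero_of_ne i hjk

end IsPermMatrix

theorem stmt_3_general {n : ℕ} (A Atil : Matrix (Fin n) (Fin n) ℝ)
    (hA : A.IsSymm)
    (hdist : ∃ (lam : Fin n → ℝ) (v : Fin n → Fin n → ℝ),
      Function.Injective lam ∧ ∀ i, v i ≠ 0 ∧ A *ᵥ v i = lam i • v i)
    (hone : ∀ (v : Fin n → ℝ) (μ : ℝ), v ≠ 0 → A *ᵥ v = μ • v → ∑ i, v i ≠ 0)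
    (Q : Matrix (Fin n) (Fin n) ℝ) (hQ : IsPermMatrix Q) (hQA : Q * A = Atil * Q) :
    {P : Matrix (Fin n) (Fin n) ℝ | IsDoublyStochastic P ∧ P * A = Atil * P} = {Q} := by
  obtain ⟨lam, v, hlam, hv⟩ := hdist
  have hQQ : Qᵀ * Q = 1 := hQ.transpose_mul_self
  ext P
  constructor
  · rintro ⟨⟨-, hProw, -⟩, hPA⟩
    have hR1 : (Qᵀ * P) *ᵥ 1 = 1 := by
      rw [← mulVec_mulVec, mulVec_one_eq_one_s3 hProw, mulVec_one_eq_one_s3 (M := Qᵀ) hQ.2.2]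
    have hR : Qᵀ * P = 1 :=
      eq_one_of_commute_of_mulVec_one hA hlam hv (fun i => hone _ _ (hv i).1 (hv i).2)
        (commute_transpose_mul_of_mul_eq_mul hQQ hQA hPA) hR1
    calc P = Q * (Qᵀ * P) := by rw [← Matrix.mul_assoc, mul_eq_one_comm.mp hQQ, Matrix.one_mul]
      _ = Q := by rw [hR, Matrix.mul_one]
  · rintro rfl
    exact ⟨hQ.isDoublyStochastic, hQA⟩

theorem stmt_3 {n : ℕ} (A Atil : Matrix (Fin n) (Fin n) ℝ)
    (hA : A.IsSymm) (hAt : Atil.IsSymm)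
    (hdist : ∃ (lam : Fin n → ℝ) (v : Fin n → Fin n → ℝ),
      Function.Injective lam ∧ ∀ i, v i ≠ 0 ∧ A *ᵥ v i = lam i • v i)
    (hone : ∀ (v : Fin n → ℝ) (μ : ℝ), v ≠ 0 → A *ᵥ v = μ • v → ∑ i, v i ≠ 0)
    (Q : Matrix (Fin n) (Fin n) ℝ) (hQ : IsPermMatrix Q) (hQA : Q * A = Atil * Q) :
    {P : Matrix (Fin n) (Fin n) ℝ | IsDoublyStochastic P ∧ P * A = Atil * P} = {Q} :=
  stmt_3_general A Atil hA hdist hone Q hQ hQA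
end

section
/- Let A and Ã be real n×n matrices and P a real n×n matrix with P 𝟙 = 𝟙. If P (A^k 𝟙) = Ã^k 𝟙 holds for every k with 1 ≤ k ≤ n, then P (A^k 𝟙) = Ã^k 𝟙 holds for every positive integer k. (By the Cayley–Hamilton theorem, powers A^k with k > n are linear combinations of A, A², …, Aⁿ; since A and Ã have the same characteristic polynomial the same combination applies to both.) -/
open Matrix BigOperators

lemma sum_mulVec' {n : ℕ} {ι : Type*} (s : Finset ι) (M : ι → Matrix (Fin n) (Fin n) ℝ)
    (v : Fin n → ℝ) : (∑ i ∈ s, M i) *ᵥ v = ∑ i ∈ s, (M i) *ᵥ v := by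
  ext j
  simp [Matrix.mulVec, dotProduct, Finset.sum_apply, Finset.sum_mul, Matrix.sum_apply]
  rw [Finset.sum_comm]

lemma pow_eq_neg_sum {n : ℕ} (A : Matrix (Fin n) (Fin n) ℝ) (hn : 0 < n) (k : ℕ) (hk : n ≤ k) :
    A ^ k = -∑ i ∈ Finset.range n, A.charpoly.coeff i • A ^ (k - n + i) := by
  have hdeg : A.charpoly.natDegree = n := by simpa using A.charpoly_natDegree_eq_dim
  have h0 : (Polynomial.aeval A) A.charpoly = 0 := A.aeval_self_charpoly
  rw [Polynomial.aeval_eq_sum_range, hdeg, Finset.sum_range_succ] at h0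
  have hmon : A.charpoly.coeff n = 1 := by
    have := A.charpoly_monic.coeff_natDegree
    rwa [hdeg] at this
  rw [hmon, one_smul] at h0
  have hAn : A ^ n = -∑ i ∈ Finset.range n, A.charpoly.coeff i • A ^ i := by
    linear_combination (norm := abel) h0
  have : A ^ k = A ^ (k - n) * A ^ n := by
    rw [← pow_add, Nat.sub_add_cancel hk]
  rw [this, hAn, mul_neg, Finset.mul_sum]
  congr 1
  apply Finset.sum_congr rfl
  intro i _
  rw [mul_smul_comm, ← pow_add]

theorem stmt_7 {n : ℕ} (A Atil P : Matrix (Fin n) (Fin n) ℝ)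
    (hchar : A.charpoly = Atil.charpoly)
    (hrow : P *ᵥ (1 : Fin n → ℝ) = 1)
    (h : ∀ k : ℕ, 1 ≤ k → k ≤ n →
      P *ᵥ ((A ^ k) *ᵥ (1 : Fin n → ℝ)) = (Atil ^ k) *ᵥ (1 : Fin n → ℝ)) :
    ∀ k : ℕ, 1 ≤ k →
      P *ᵥ ((A ^ k) *ᵥ (1 : Fin n → ℝ)) = (Atil ^ k) *ᵥ (1 : Fin n → ℝ) := by
  rcases Nat.eq_zero_or_pos n with hn | hn
  · subst hn
    intro k _
    ext i
    exact i.elim0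
  intro k
  induction k using Nat.strong_induction_on with
  | _ k ih =>
    intro hk
    by_cases hkn : k ≤ n
    · exact h k hk hkn
    push_neg at hkn
    have hnk : n ≤ k := le_of_lt hkn
    have key : ∀ m, m < k → P *ᵥ ((A ^ m) *ᵥ (1 : Fin n → ℝ)) = (Atil ^ m) *ᵥ (1 : Fin n → ℝ) := by
      intro m hm
      rcases Nat.eq_zero_or_pos m with hm0 | hm0
      · subst hm0
        simpa using hrow
      · exact ih m hm hm0
    rw [pow_eq_neg_sum A hn k hnk, pow_eq_neg_sum Atil hn k hnk, ← hchar,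
      neg_mulVec, neg_mulVec, sum_mulVec', sum_mulVec', Matrix.mulVec_neg]
    congr 1
    have hmap := map_sum (Matrix.mulVecLin P)
      (fun i => (A.charpoly.coeff i • A ^ (k - n + i)) *ᵥ (1 : Fin n → ℝ)) (Finset.range n)
    simp only [Matrix.mulVecLin_apply] at hmap
    rw [hmap]
    apply Finset.sum_congr rfl
    intro i hi
    rw [Matrix.smul_mulVec, Matrix.smul_mulVec, Matrix.mulVec_smul]
    congr 1
    exact key _ (by simp at hi; omega)
end

section
/- Let A and Ã be real symmetric n×n matrices, P an n×n permutation matrix with P A = Ã P, and λ ∈ ℝ. Let V ∈ ℝ^{n×k} satisfy A V = λ V and Vᵀ V = I_k, and let Ṽ ∈ ℝ^{n×k} satisfy Ã Ṽ = λ Ṽ, Ṽᵀ Ṽ = I_k, and suppose every vector x with Ã x = λ x satisfies Ṽ Ṽᵀ x = x (the columns of Ṽ span the λ-eigenspace of Ã). Then the matrix Q = Ṽᵀ P V satisfies P V = Ṽ Q and Qᵀ Q = I_k, i.e., Q is orthogonal; consequently P (V Vᵀ) Pᵀ = Ṽ Ṽᵀ. -/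
open Matrix BigOperators

lemma perm_orth {n : ℕ} {P : Matrix (Fin n) (Fin n) ℝ} (hP : IsPermMatrix P) :
    Pᵀ * P = 1 := by
  obtain ⟨h01, hrow, hcol⟩ := hP
  ext i j
  simp only [mul_apply, transpose_apply, one_apply]
  by_cases hij : i = j
  · subst hij
    simp only [if_pos rfl]
    have : ∀ x, P x i * P x i = P x i := by
      intro x; rcases h01 x i with h | h <;> simp [h]
    rw [Finset.sum_congr rfl fun x _ => this x, hcol i]; simp
  · simp only [if_neg hij]
    apply Finset.sum_eq_zero
    intro x _
    rcases h01 x i with h | h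
    · simp [h]
    rcases h01 x j with h2 | h2
    · simp [h2]
    exfalso
    have hle : ∑ c ∈ ({i, j} : Finset (Fin n)), P x c ≤ ∑ c, P x c := by
      apply Finset.sum_le_sum_of_subset_of_nonneg (Finset.subset_univ _)
      intro c _ _
      rcases h01 x c with h3 | h3 <;> simp [h3]
    rw [Finset.sum_pair hij, h, h2, hrow x] at hle
    linarith

theorem stmt_9 {n k : ℕ} (A Atil P : Matrix (Fin n) (Fin n) ℝ)
    (hA : A.IsSymm) (hAt : Atil.IsSymm) (hP : IsPermMatrix P)
    (hPA : P * A = Atil * P) (μ : ℝ)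
    (V Vt : Matrix (Fin n) (Fin k) ℝ)
    (hV1 : A * V = μ • V) (hV2 : Vᵀ * V = 1)
    (hVt1 : Atil * Vt = μ • Vt) (hVt2 : Vtᵀ * Vt = 1)
    (hspan : ∀ x : Fin n → ℝ, Atil *ᵥ x = μ • x → (Vt * Vtᵀ) *ᵥ x = x) :
    P * V = Vt * (Vtᵀ * P * V) ∧
      (Vtᵀ * P * V)ᵀ * (Vtᵀ * P * V) = 1 ∧
      P * (V * Vᵀ) * Pᵀ = Vt * Vtᵀ := by
  have hPtP : Pᵀ * P = 1 := perm_orth hP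
  -- eigen equation for P*V
  have heig : Atil * (P * V) = μ • (P * V) := by
    rw [← Matrix.mul_assoc, ← hPA, Matrix.mul_assoc, hV1, Matrix.mul_smul]
  -- first claim
  have h1 : P * V = Vt * (Vtᵀ * P * V) := by
    have : (Vt * Vtᵀ) * (P * V) = P * V := by
      ext i c
      have hx := hspan (fun r => (P * V) r c) ?_
      · have := congrFun hx i
        simpa [Matrix.mulVec, Matrix.mul_apply, dotProduct] using this
      · funext r
        have := congrFun (congrFun heig r) c
        simpa [Matrix.mulVec, Matrix.mul_apply, dotProduct] using this
    calc P * V = (Vt * Vtᵀ) * (P * V) := this.symm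
      _ = Vt * (Vtᵀ * P * V) := by simp only [Matrix.mul_assoc]
  have h2 : (Vtᵀ * P * V)ᵀ * (Vtᵀ * P * V) = 1 := by
    calc (Vtᵀ * P * V)ᵀ * (Vtᵀ * P * V)
        = Vᵀ * (Pᵀ * (Vt * (Vtᵀ * P * V))) := by
          simp only [Matrix.transpose_mul, Matrix.transpose_transpose, Matrix.mul_assoc]
      _ = Vᵀ * (Pᵀ * (P * V)) := by rw [← h1]
      _ = Vᵀ * ((Pᵀ * P) * V) := by simp only [Matrix.mul_assoc]
      _ = 1 := by rw [hPtP, Matrix.one_mul, hV2]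
  refine ⟨h1, h2, ?_⟩
  have hQQt : (Vtᵀ * P * V) * (Vtᵀ * P * V)ᵀ = 1 :=
    mul_eq_one_comm.mp h2
  calc P * (V * Vᵀ) * Pᵀ = (P * V) * (P * V)ᵀ := by
        simp only [Matrix.transpose_mul, Matrix.mul_assoc]
    _ = (Vt * (Vtᵀ * P * V)) * (Vt * (Vtᵀ * P * V))ᵀ := by rw [← h1]
    _ = Vt * (((Vtᵀ * P * V) * (Vtᵀ * P * V)ᵀ) * Vtᵀ) := by
        simp only [Matrix.transpose_mul, Matrix.mul_assoc]
    _ = Vt * Vtᵀ := by rw [hQQt, Matrix.one_mul]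
end

section
/- Call a real symmetric n×n matrix A friendly if A has n distinct eigenvalues and every eigenvector u of A satisfies 𝟙ᵀu ≠ 0. If A is friendly, then the only doubly stochastic matrix P satisfying P A = A P is the identity matrix; i.e., the set { P doubly stochastic : P A = A P } is the singleton {I}. -/
open Matrix BigOperators

/-!
Eigenvectors `v i` of `A` with distinct eigenvalues form a basis, and each eigenspace of `A` is
the line spanned by one of them. A matrix `P` commuting with `A` preserves the eigenspaces, so
`P v i = c i • v i`. Column sums equal to one make `P` preserve the coordinate sum `∑ k, u k`,
which is nonzero on every eigenvector; hence `c i = 1` for all `i` and `P = 1`.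
-/

namespace Module.Basis

variable {K V ι : Type*} [Field K] [AddCommGroup V] [Module K V]
  (b : Basis ι K V) {f : Module.End K V} {lam : ι → K}

theorem coord_comp_eq_smul_coord (hf : ∀ j, f (b j) = lam j • b j) (i : ι) :
    b.coord i ∘ₗ f = lam i • b.coord i := by
  classical
  refine b.ext fun j => ?_
  obtain rfl | hij := eq_or_ne i j
  · simp [hf]
  · simp [hf, Finsupp.single_eq_of_ne hij]

theorem eq_repr_smul_of_mem_eigenspace (hf : ∀ j, f (b j) = lam j • b j)
    (hlam : Function.Injective lam) {i : ι} {w : V} (hw : w ∈ f.eigenspace (lam i)) :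
    w = b.repr w i • b i := by
  classical
  refine b.ext_elem fun j => ?_
  obtain rfl | hij := eq_or_ne i j
  · simp
  have hcoord : lam j * b.repr w j = lam i * b.repr w j := by
    simpa [Module.End.mem_eigenspace_iff.mp hw] using
      (LinearMap.congr_fun (b.coord_comp_eq_smul_coord hf j) w).symm
  have hzero : b.repr w j = 0 := by
    have : (lam j - lam i) * b.repr w j = 0 := by linear_combination hcoord
    simpa [sub_ne_zero.mpr (hlam.ne hij.symm)] using this
  simp [hzero, hij]

theorem eq_one_of_commute (hf : ∀ j, f (b j) = lam j • b j) (hlam : Function.Injective lam)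
    {g : Module.End K V} (hfg : Commute f g) (φ : V →ₗ[K] K) (hφg : φ ∘ₗ g = φ)
    (hφb : ∀ i, φ (b i) ≠ 0) : g = 1 := by
  refine b.ext fun i => ?_
  have hgb : g (b i) ∈ f.eigenspace (lam i) :=
    f.mapsTo_genEigenspace_of_comm hfg (lam i) 1 (Module.End.mem_eigenspace_iff.mpr (hf i))
  have hgb_eq := b.eq_repr_smul_of_mem_eigenspace hf hlam hgb
  have hc : b.repr (g (b i)) i = 1 := by
    have hφ := LinearMap.congr_fun hφg (b i)
    rw [LinearMap.comp_apply, hgb_eq, map_smul, smul_eq_mul] at hφ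
    exact mul_right_cancel₀ (hφb i) (hφ.trans (one_mul _).symm)
  rw [hgb_eq, hc, one_smul, Module.End.one_apply]

end Module.Basis

theorem Matrix.sum_mulVec_of_sum_col_eq_one {m n R : Type*} [Fintype m] [Fintype n]
    [CommSemiring R] {P : Matrix m n R} (hcol : ∀ j, ∑ i, P i j = 1) (u : n → R) :
    ∑ i, (P *ᵥ u) i = ∑ j, u j := by
  simp only [mulVec, dotProduct]
  rw [Finset.sum_comm]
  simp [← Finset.sum_mul, hcol]

theorem isDoublyStochastic_one {n : ℕ} : IsDoublyStochastic (1 : Matrix (Fin n) (Fin n) ℝ) :=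
  ⟨fun i j => by by_cases h : i = j <;> simp [one_apply, h], fun i => by simp [one_apply],
    fun j => by simp [one_apply]⟩

theorem stmt_15_general {n : ℕ} (A : Matrix (Fin n) (Fin n) ℝ)
    (hdist : ∃ (lam : Fin n → ℝ) (v : Fin n → Fin n → ℝ),
      Function.Injective lam ∧ ∀ i, v i ≠ 0 ∧ A *ᵥ v i = lam i • v i)
    (hone : ∀ (u : Fin n → ℝ) (μ : ℝ), u ≠ 0 → A *ᵥ u = μ • u → ∑ i, u i ≠ 0) :
    {P : Matrix (Fin n) (Fin n) ℝ | IsDoublyStochastic P ∧ P * A = A * P} = {1} := by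
  obtain ⟨lam, v, hlam, hv⟩ := hdist
  have hAv : ∀ i, toLinAlgEquiv' A (v i) = lam i • v i := fun i => by simpa using (hv i).2
  have hv_indep : LinearIndependent ℝ v :=
    Module.End.eigenvectors_linearIndependent' (toLinAlgEquiv' A) lam hlam v fun i =>
      ⟨Module.End.mem_eigenspace_iff.mpr (hAv i), (hv i).1⟩
  let b := basisOfLinearIndependentOfCardEqFinrank' v hv_indep
    (Module.finrank_fintype_fun_eq_card ℝ).symm
  have hb : ⇑b = v := coe_basisOfLinearIndependentOfCardEqFinrank' _ _ _
  let sumCoords : (Fin n → ℝ) →ₗ[ℝ] ℝ := ∑ i, LinearMap.proj i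
  refine Set.eq_singleton_iff_unique_mem.mpr ⟨⟨isDoublyStochastic_one, by simp⟩, ?_⟩
  rintro P ⟨⟨-, -, hcol⟩, hPA⟩
  have hP : toLinAlgEquiv' P = 1 :=
    b.eq_one_of_commute (f := toLinAlgEquiv' A) (by simpa [hb] using hAv) hlam
      ((show Commute P A from hPA).symm.map toLinAlgEquiv') sumCoords
      (LinearMap.ext fun u => by simpa [sumCoords] using sum_mulVec_of_sum_col_eq_one hcol u)
      (fun i => by simpa [sumCoords, hb] using hone _ _ (hv i).1 (hv i).2)
  exact (map_eq_one_iff _ toLinAlgEquiv'.injective).mp hP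

theorem stmt_15 {n : ℕ} (A : Matrix (Fin n) (Fin n) ℝ)
    (hA : A.IsSymm)
    (hdist : ∃ (lam : Fin n → ℝ) (v : Fin n → Fin n → ℝ),
      Function.Injective lam ∧ ∀ i, v i ≠ 0 ∧ A *ᵥ v i = lam i • v i)
    (hone : ∀ (u : Fin n → ℝ) (μ : ℝ), u ≠ 0 → A *ᵥ u = μ • u → ∑ i, u i ≠ 0) :
    {P : Matrix (Fin n) (Fin n) ℝ | IsDoublyStochastic P ∧ P * A = A * P} = {1} :=
  stmt_15_general A hdist hone
end

section
/- Call a real symmetric n×n matrix A friendly if A has n distinct eigenvalues and every eigenvector u of A satisfies 𝟙ᵀu ≠ 0. Every friendly matrix is asymmetric: the only permutation matrix P satisfying P A = A P is the identity, i.e., the automorphism group of the corresponding graph is trivial. -/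
open Matrix BigOperators

/-!
Since the eigenvalues of `A` are simple, each eigenspace is a line, and a matrix `P` commuting
with `A` maps it to itself: `P vᵢ = cᵢ vᵢ`. A permutation matrix preserves the coordinate sum,
and `𝟙ᵀvᵢ ≠ 0`, so `cᵢ = 1`. Hence `P` fixes an eigenbasis of `A`, i.e. `P = 1`.
-/

namespace Module.Basis

variable {K V ι : Type*} [Field K] [AddCommGroup V] [Module K V]

theorem repr_apply_of_apply_eq_smul (b : Basis ι K V) {f : Module.End K V} {lam : ι → K}
    (hb : ∀ j, f (b j) = lam j • b j) (x : V) (j : ι) :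
    b.repr (f x) j = lam j * b.repr x j := by
  have hcoord : b.coord j ∘ₗ f = lam j • b.coord j := b.ext fun k => by
    by_cases hkj : k = j
    · subst hkj; simp [hb]
    · simp [hb, Ne.symm hkj]
  simpa using LinearMap.congr_fun hcoord x

theorem eq_repr_smul_of_apply_eq_smul (b : Basis ι K V) {f : Module.End K V} {lam : ι → K}
    (hlam : Function.Injective lam) (hb : ∀ j, f (b j) = lam j • b j) {i : ι} {w : V}
    (hw : f w = lam i • w) : w = b.repr w i • b i := by
  refine b.repr.injective (Finsupp.ext fun j => ?_)
  by_cases hji : j = i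
  · subst hji; simp
  · have hcoeff : lam j * b.repr w j = lam i * b.repr w j := by
      rw [← repr_apply_of_apply_eq_smul b hb, hw, map_smul, Finsupp.smul_apply, smul_eq_mul]
    have hzero : b.repr w j = 0 := by
      by_contra hr
      exact hlam.ne hji (mul_right_cancel₀ hr hcoeff)
    simp [Ne.symm hji, hzero]

end Module.Basis

namespace Matrix

variable {m : Type*} [Fintype m]

theorem sum_mulVec_of_sum_col_eq_one_s16 {R : Type*} [Semiring R] {P : Matrix m m R}
    (hP : ∀ j, ∑ i, P i j = 1) (x : m → R) : ∑ i, (P *ᵥ x) i = ∑ i, x i := by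
  have hones : 1 ᵥ* P = 1 := funext fun j => by simp [vecMul, dotProduct, hP]
  rw [← one_dotProduct, dotProduct_mulVec, hones, one_dotProduct]

theorem eq_one_of_commute_of_eigenbasis {K ι : Type*} [Field K] [DecidableEq m]
    {A P : Matrix m m K} (b : Module.Basis ι K (m → K)) {lam : ι → K}
    (hlam : Function.Injective lam) (hb : ∀ j, A *ᵥ b j = lam j • b j)
    (hb_sum : ∀ j, ∑ k, b j k ≠ 0) (hP : ∀ j, ∑ i, P i j = 1) (hcomm : P * A = A * P) :
    P = 1 := by
  have hfix : ∀ i, P *ᵥ b i = b i := by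
    intro i
    have hPb : toLin' A (P *ᵥ b i) = lam i • (P *ᵥ b i) := by
      rw [toLin'_apply, mulVec_mulVec, ← hcomm, ← mulVec_mulVec, hb, mulVec_smul]
    set c := b.repr (P *ᵥ b i) i
    have hc : P *ᵥ b i = c • b i := b.eq_repr_smul_of_apply_eq_smul hlam hb hPb
    have hsum : c * ∑ k, b i k = ∑ k, b i k := calc
      c * ∑ k, b i k = ∑ k, (P *ᵥ b i) k := by simp [hc, Finset.mul_sum]
      _ = ∑ k, b i k := sum_mulVec_of_sum_col_eq_one_s16 hP (b i)
    rw [hc, (mul_eq_right₀ (hb_sum i)).mp hsum, one_smul]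
  exact toLin'.injective (b.ext fun i => by simp [hfix])

end Matrix

theorem stmt_16_general {n : ℕ} (A : Matrix (Fin n) (Fin n) ℝ)
    (hdist : ∃ (lam : Fin n → ℝ) (v : Fin n → Fin n → ℝ),
      Function.Injective lam ∧ ∀ i, v i ≠ 0 ∧ A *ᵥ v i = lam i • v i)
    (hone : ∀ (u : Fin n → ℝ) (μ : ℝ), u ≠ 0 → A *ᵥ u = μ • u → ∑ i, u i ≠ 0) :
    ∀ P : Matrix (Fin n) (Fin n) ℝ, IsPermMatrix P → P * A = A * P → P = 1 := by
  intro P hP hcomm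
  obtain ⟨lam, v, hlam, hv⟩ := hdist
  have hli : LinearIndependent ℝ v :=
    Module.End.eigenvectors_linearIndependent' (toLin' A) lam hlam v fun i =>
      Module.End.hasEigenvector_iff.mpr ⟨Module.End.mem_eigenspace_iff.mpr (hv i).2, (hv i).1⟩
  let b := basisOfLinearIndependentOfCardEqFinrank' v hli (by simp)
  have hb : ⇑b = v := coe_basisOfLinearIndependentOfCardEqFinrank' v hli _
  refine eq_one_of_commute_of_eigenbasis b hlam (fun j => ?_) (fun j => ?_) hP.2.2 hcomm
  · rw [hb]; exact (hv j).2
  · rw [hb]; exact hone _ _ (hv j).1 (hv j).2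

theorem stmt_16 {n : ℕ} (A : Matrix (Fin n) (Fin n) ℝ)
    (hA : A.IsSymm)
    (hdist : ∃ (lam : Fin n → ℝ) (v : Fin n → Fin n → ℝ),
      Function.Injective lam ∧ ∀ i, v i ≠ 0 ∧ A *ᵥ v i = lam i • v i)
    (hone : ∀ (u : Fin n → ℝ) (μ : ℝ), u ≠ 0 → A *ᵥ u = μ • u → ∑ i, u i ≠ 0) :
    ∀ P : Matrix (Fin n) (Fin n) ℝ, IsPermMatrix P → P * A = A * P → P = 1 :=
  stmt_16_general A hdist hone
end
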